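/- Let k ≥ l ≥ 1 and let B = R_{k,l} ⊗_{R_{k+l}} R_{k,l}, where R_{k,l} ⊂ ℂ[z₁,...,z_{k+l}] is the subring of polynomials invariant under S_k × S_l and R_{k+l} the subring of symmetric polynomials. The R_{k,l}-bimodule map Δ: R_{k,l} → B determined by Δ(1) = ∑_α (−1)^{|α|} π_α ⊗ π'_{\overline{α^*}}, summed over partitions α with l ≥ α₁ ≥ ... ≥ α_k ≥ 0, is a well-defined bimodule homomorphism, where π_α is the Schur polynomial in z₁,...,z_k and π'_β the Schur polynomial in z_{k+1},...,z_{k+l}, α* = (l−α_k,...,l−α₁), and overline denotes conjugate partition. -/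

import Mathlib

open Finset

/-! Koszul presentation of the Soergel bimodule `B = R_{k,l} ⊗_{R_{k+l}} R_{k,l}`:
the polynomial ring `ℂ[x₁,...,x_k,y₁,...,y_l,x'₁,...,x'_k,y'₁,...,y'_l]` (in the
elementary-symmetric variables) modulo the ideal `I` generated by
`Σ_i^{x,y} − Σ_i^{x',y'}`, `i = 1,...,k+l`.  A bimodule map `Δ : R_{k,l} → B` with
`Δ(1) = ∑ p_i ⊗ q_i` corresponds to `f = ∑ p_i(x,y) q_i(x',y')`, and the bimodule-map
condition is `(y_j − y'_j)·f ∈ I` for `j = 1,...,l`. -/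

/-- Variables: `x`, `y` (left factor) and `x'`, `y'` (right factor). -/
abbrev BigVar (k l : ℕ) := (Fin k ⊕ Fin l) ⊕ (Fin k ⊕ Fin l)

abbrev Rbig (k l : ℕ) := MvPolynomial (BigVar k l) ℂ

/-- `x_j` for `1 ≤ j ≤ k`, with `x₀ = 1` and `x_j = 0` for `j > k`. -/
noncomputable def xv (k l : ℕ) (j : ℕ) : Rbig k l :=
  if h0 : j = 0 then 1 else if h : j ≤ k then MvPolynomial.X (.inl (.inl ⟨j - 1, by omega⟩)) else 0

noncomputable def yv (k l : ℕ) (j : ℕ) : Rbig k l :=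
  if h0 : j = 0 then 1 else if h : j ≤ l then MvPolynomial.X (.inl (.inr ⟨j - 1, by omega⟩)) else 0

noncomputable def xv' (k l : ℕ) (j : ℕ) : Rbig k l :=
  if h0 : j = 0 then 1 else if h : j ≤ k then MvPolynomial.X (.inr (.inl ⟨j - 1, by omega⟩)) else 0

noncomputable def yv' (k l : ℕ) (j : ℕ) : Rbig k l :=
  if h0 : j = 0 then 1 else if h : j ≤ l then MvPolynomial.X (.inr (.inr ⟨j - 1, by omega⟩)) else 0

/-- `Σ_i^{x,y} = ∑_{j=0}^{i} x_j y_{i−j}`. -/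
noncomputable def SigXY (k l : ℕ) (c d : ℕ → Rbig k l) (i : ℕ) : Rbig k l :=
  ∑ j ∈ Finset.range (i + 1), c j * d (i - j)

/-- The ideal `I` generated by `Σ_i^{x,y} − Σ_i^{x',y'}` for `i = 1,...,k+l`. -/
noncomputable def Ibig (k l : ℕ) : Ideal (Rbig k l) :=
  Ideal.span ((fun i => SigXY k l (xv k l) (yv k l) i - SigXY k l (xv' k l) (yv' k l) i) ''
    (Set.Icc 1 (k + l)))

/-- Elementary-symmetric variables with integer index (`0` outside range). -/
noncomputable def xe (k l : ℕ) : ℤ → Rbig k l :=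
  fun n => if 0 ≤ n then xv k l n.toNat else 0

noncomputable def ye' (k l : ℕ) : ℤ → Rbig k l :=
  fun n => if 0 ≤ n then yv' k l n.toNat else 0

/-- Conjugate partition: `(conj α)_j = #{i : α_i ≥ j}`. -/
def conjP {k : ℕ} (l : ℕ) (α : Fin k → ℕ) : Fin l → ℕ :=
  fun j => (Finset.filter (fun i : Fin k => (j : ℕ) + 1 ≤ α i) Finset.univ).card

/-- `f = ∑_α (−1)^{|α|} π_α(x) π'_{\overline{α^*}}(y')`, summed over partitions `α` with
`l ≥ α₁ ≥ ... ≥ α_k ≥ 0`; Schur polynomials are Giambelli determinants in the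
elementary-symmetric variables (`π_α = |x_{μ_a+b−a}|` with `μ` the conjugate of `α`,
and `π'_{\overline{α^*}} = |y'_{α^*_a+b−a}|`). -/
noncomputable def fBig (k l : ℕ) : Rbig k l :=
  ∑ α ∈ Finset.filter (fun α : Fin k → Fin (l + 1) => ∀ i j : Fin k, i ≤ j → α j ≤ α i)
      Finset.univ,
    (-1 : Rbig k l) ^ (∑ i, (α i : ℕ)) *
      Matrix.det (fun a b : Fin l =>
        xe k l ((conjP l (fun i => (α i : ℕ)) a : ℤ) + (b : ℤ) - (a : ℤ))) *
      Matrix.det (fun a b : Fin k =>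
        ye' k l (((l - (α a.rev : ℕ) : ℕ) : ℤ) + (b : ℤ) - (a : ℤ)))

/-!
With `v = (y₁ - y'₁, …, y_l - y'_l, x₁ - x'₁, …, x_k - x'_k)` and `S` the `(l+k) × (l+k)`
matrix whose row `r` is `(x_r, x_{r-1}, …, x_{r-l+1}, y'_r, …, y'_{r-k+1})` (variables of
negative index being `0`), the identity `x y - x' y' = x (y - y') + y' (x - x')` in each degree
shows that `(S v)_r` is the generator `Σ_{r+1}^{x,y} - Σ_{r+1}^{x',y'}` of `I`. Cramer's rule
(`adj S · S = det S`) then puts `det S · v_c` in `I` for every `c`. Laplace expansion of `det S`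
along its first `l` columns has one term for each `k`-element set of rows, i.e. for each
partition `α` in the `k × l` box; the two complementary minors are the Giambelli determinants
`π_α(x)` and `π'_{\overline{α^*}}(y')`, and the sign of the shuffle permutation is `(-1)^{|α|}`,
because exactly `α_i` of the rows of the first block lie below the `i`-th row of the second
block. Hence `det S = f`.
-/

open Equiv Matrix

theorem StrictMono.val_apply_add_le {a b : ℕ} {f : Fin a → Fin b} (hf : StrictMono f)
    {i j : Fin a} (hij : i ≤ j) : (f i : ℕ) + j ≤ f j + i := by
  obtain ⟨d, hd⟩ := Nat.exists_eq_add_of_le (Fin.le_def.1 hij)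
  induction d generalizing j with
  | zero => simp [Fin.ext hd]
  | succ d ih =>
    have hd' : (i : ℕ) + d < a := by omega
    have h₁ := ih (j := ⟨i + d, hd'⟩) (Fin.le_def.2 (by simp)) rfl
    have h₂ : f ⟨i + d, hd'⟩ < f j := hf (Fin.lt_def.2 (by simp; omega))
    rw [Fin.lt_def] at h₂
    simp only at h₁
    omega

theorem StrictMono.le_val_apply {a b : ℕ} {f : Fin a → Fin b} (hf : StrictMono f) (i : Fin a) :
    (i : ℕ) ≤ f i := by
  have := hf.val_apply_add_le (i := ⟨0, i.pos⟩) (j := i) (Fin.le_def.2 (Nat.zero_le _))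
  simp at this
  omega

theorem StrictMono.val_apply_add_le_add {a b : ℕ} {f : Fin a → Fin b} (hf : StrictMono f)
    (i : Fin a) : (f i : ℕ) + a ≤ b + i := by
  have ha : a - 1 < a := by have := i.isLt; omega
  have h₁ := hf.val_apply_add_le (i := i) (j := ⟨a - 1, ha⟩) (Fin.le_def.2 (by simp; omega))
  have h₂ := (f ⟨a - 1, ha⟩).isLt
  simp only at h₁
  omega

theorem Equiv.Perm.sign_finSumFinEquiv_symm_trans {k l : ℕ} (e : Fin l ⊕ Fin k ≃ Fin (l + k))
    (h₁ : StrictMono (e ∘ Sum.inl)) (h₂ : StrictMono (e ∘ Sum.inr)) :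
    sign (finSumFinEquiv.symm.trans e) = ∏ b, (-1) ^ #{a | e (.inr b) < e (.inl a)} := by
  rw [sign_eq_prod_prod_Iio]
  simp_rw [← filter_gt_eq_Iio, prod_filter]
  rw [← finSumFinEquiv.prod_comp, Fintype.prod_sum_type]
  simp_rw [← finSumFinEquiv.prod_comp, Fintype.prod_sum_type, Equiv.trans_apply,
    Equiv.symm_apply_apply, finSumFinEquiv_apply_left, finSumFinEquiv_apply_right]
  have hlt : ∀ (a : Fin l) (b : Fin k), Fin.castAdd k a < Fin.natAdd l b := fun a b => by
    simp [Fin.lt_def]; omega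
  have hinr : ∀ (a : Fin l) (b : Fin k), ¬ e (.inl a) < e (.inr b) ↔ e (.inr b) < e (.inl a) :=
    fun a b => not_lt.trans (e.injective.ne Sum.inr_ne_inl).le_iff_lt
  have hl : ∀ a a' : Fin l, e (.inl a) < e (.inl a') ↔ a < a' := fun _ _ => h₁.lt_iff_lt
  have hr : ∀ b b' : Fin k, e (.inr b) < e (.inr b') ↔ b < b' := fun _ _ => h₂.lt_iff_lt
  have hc : ∀ a a' : Fin l, Fin.castAdd k a < Fin.castAdd k a' ↔ a < a' :=
    fun _ _ => (Fin.strictMono_castAdd k).lt_iff_lt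
  have hite : ∀ (p : Prop) [Decidable p], (if p then (if p then 1 else -1) else 1 : ℤˣ) = 1 :=
    fun p _ => by split_ifs <;> rfl
  simp only [hlt, (hlt _ _).not_gt, hl, hr, hc, hite, if_true, if_false, prod_const_one,
    one_mul, mul_one, prod_ite, prod_const, hinr, Fin.natAdd_lt_natAdd_iff]

theorem Matrix.det_mul_mem_of_mulVec_mem {n R : Type*} [Fintype n] [DecidableEq n] [CommRing R]
    {I : Ideal R} {A : Matrix n n R} {v : n → R} (h : ∀ i, (A *ᵥ v) i ∈ I) (j : n) :
    A.det * v j ∈ I := by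
  have : (A.adjugate *ᵥ (A *ᵥ v)) j ∈ I := I.sum_mem fun i _ => I.mul_mem_left _ (h i)
  rwa [mulVec_mulVec, adjugate_mul, smul_mulVec, one_mulVec, Pi.smul_apply, smul_eq_mul] at this

theorem Finset.Nat.sum_antidiagonal_mul_eq_sum_fin {R : Type*} [Semiring R] {m : ℕ} (U : ℤ → R)
    (hU : ∀ n < 0, U n = 0) (w : ℕ → R) (hw₀ : w 0 = 0) (hw : ∀ a, m ≤ a → w (a + 1) = 0)
    (n : ℕ) : ∑ p ∈ antidiagonal n, U p.1 * w p.2 = ∑ a : Fin m, U (n - 1 - a) * w (a + 1) := by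
  set F : ℕ → R := fun a => U (n - 1 - a) * w (a + 1)
  have h₁ : ∑ a ∈ range n, F a = ∑ a ∈ range (n + m), F a :=
    sum_subset (range_subset_range.2 (by omega)) fun a _ ha => by
      simp only [mem_range, not_lt] at ha
      simp only [F, hU ((n : ℤ) - 1 - a) (by omega), zero_mul]
  have h₂ : ∑ a ∈ range m, F a = ∑ a ∈ range (n + m), F a :=
    sum_subset (range_subset_range.2 (by omega)) fun a _ ha => by
      simp only [mem_range, not_lt] at ha
      simp only [F, hw a ha, mul_zero]
  rw [← Nat.sum_antidiagonal_swap]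
  simp only [Prod.fst_swap, Prod.snd_swap]
  rw [Nat.sum_antidiagonal_eq_sum_range_succ_mk, sum_range_succ', Fin.sum_univ_eq_sum_range F]
  simp only [hw₀, mul_zero, add_zero]
  rw [h₂, ← h₁]
  refine sum_congr rfl fun a ha => ?_
  rw [mem_range] at ha
  simp only [F, Nat.cast_sub (show a + 1 ≤ n by omega)]
  push_cast
  ring_nf

section BoxPartition

variable {k l : ℕ}

def boxPartitions (k l : ℕ) : Finset (Fin k → Fin (l + 1)) :=
  Finset.univ.filter fun α => ∀ i j : Fin k, i ≤ j → α j ≤ α i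

theorem mem_boxPartitions {α : Fin k → Fin (l + 1)} : α ∈ boxPartitions k l ↔ Antitone α := by
  simp [boxPartitions, Antitone]

theorem conjP_le (α : Fin k → ℕ) (j : Fin l) : conjP l α j ≤ k :=
  (Finset.card_filter_le _ _).trans_eq (Finset.card_fin k)

theorem conjP_antitone (α : Fin k → ℕ) : Antitone (conjP l α) := fun i j hij =>
  Finset.card_le_card fun x hx => by
    simp only [Finset.mem_filter, Finset.mem_univ, true_and] at hx ⊢
    have : (i : ℕ) ≤ j := hij
    omega

theorem lt_conjP_iff {α : Fin k → ℕ} (hα : Antitone α) (i : Fin k) (j : Fin l) :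
    (i : ℕ) < conjP l α j ↔ (j : ℕ) < α i := by
  constructor
  · intro h
    by_contra! hαi
    have hsub : Finset.univ.filter (fun i' : Fin k => (j : ℕ) + 1 ≤ α i') ⊆ Finset.Iio i :=
      fun i' hi' => by
        simp only [Finset.mem_filter, Finset.mem_univ, true_and, Finset.mem_Iio] at hi' ⊢
        by_contra! hii'
        have := hα hii'
        omega
    have := (Finset.card_le_card hsub).trans_eq (Fin.card_Iio i)
    simp only [conjP] at h
    omega
  · intro h
    have hsub : Finset.Iic i ⊆ Finset.univ.filter (fun i' : Fin k => (j : ℕ) + 1 ≤ α i') :=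
      fun i' hi' => by
        simp only [Finset.mem_filter, Finset.mem_univ, true_and, Finset.mem_Iic] at hi' ⊢
        have := hα hi'
        omega
    have := Finset.card_le_card hsub
    rw [Fin.card_Iic] at this
    simp only [conjP]
    omega

/- For a partition `α` in the `k × l` box with conjugate `μ`, the rows `l + i - α_i` and
`μ_{l-1-c} + c` are the vertical and the horizontal steps of the boundary path of `α`; in
particular they split `Fin (l + k)` into two increasing sequences. -/
def rowsInl (α : Fin k → Fin (l + 1)) (c : Fin l) : Fin (l + k) :=
  ⟨conjP l (fun i => (α i : ℕ)) c.rev + c, by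
    have := conjP_le (fun i => (α i : ℕ)) c.rev; omega⟩

def rowsInr (α : Fin k → Fin (l + 1)) (i : Fin k) : Fin (l + k) :=
  ⟨l + i - α i, by omega⟩

theorem rowsInl_strictMono (α : Fin k → Fin (l + 1)) : StrictMono (rowsInl α) := by
  intro c c' h
  have := conjP_antitone (fun i => (α i : ℕ)) (Fin.rev_le_rev.2 h.le)
  simp only [rowsInl, Fin.lt_def] at h ⊢
  omega

theorem rowsInr_strictMono {α : Fin k → Fin (l + 1)} (hα : Antitone α) :
    StrictMono (rowsInr α) := by
  intro i i' h
  have : (α i' : ℕ) ≤ α i := hα h.le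
  have := (α i).isLt
  simp only [rowsInr, Fin.lt_def] at h ⊢
  omega

theorem rowsInr_lt_rowsInl {α : Fin k → Fin (l + 1)} (hα : Antitone α) {i : Fin k} {c : Fin l}
    (h : (c.rev : ℕ) < α i) : rowsInr α i < rowsInl α c := by
  have := (lt_conjP_iff (fun _ _ hij => hα hij) i c.rev).2 h
  simp only [rowsInl, rowsInr, Fin.lt_def, Fin.val_rev] at this h ⊢
  omega

theorem rowsInl_lt_rowsInr {α : Fin k → Fin (l + 1)} (hα : Antitone α) {i : Fin k} {c : Fin l}
    (h : (α i : ℕ) ≤ c.rev) : rowsInl α c < rowsInr α i := by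
  have := mt (lt_conjP_iff (fun _ _ hij => hα hij) i c.rev).1 (by omega)
  simp only [rowsInl, rowsInr, Fin.lt_def, Fin.val_rev] at this h ⊢
  omega

theorem rowsInl_ne_rowsInr {α : Fin k → Fin (l + 1)} (hα : Antitone α) (c : Fin l) (i : Fin k) :
    rowsInl α c ≠ rowsInr α i := by
  rcases lt_or_ge (c.rev : ℕ) (α i) with h | h
  · exact (rowsInr_lt_rowsInl hα h).ne'
  · exact (rowsInl_lt_rowsInr hα h).ne

noncomputable def rowsEquiv {α : Fin k → Fin (l + 1)} (hα : Antitone α) :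
    Fin l ⊕ Fin k ≃ Fin (l + k) :=
  Equiv.ofBijective (Sum.elim (rowsInl α) (rowsInr α)) <|
    (Fintype.bijective_iff_injective_and_card _).2
      ⟨(rowsInl_strictMono α).injective.sumElim (rowsInr_strictMono hα).injective
        (rowsInl_ne_rowsInr hα), by simp⟩

theorem card_rowsInr_lt_rowsInl {α : Fin k → Fin (l + 1)} (hα : Antitone α) (i : Fin k) :
    #{c | rowsInr α i < rowsInl α c} = α i := by
  have hfilter : univ.filter (fun c => rowsInr α i < rowsInl α c) =
      univ.filter fun c : Fin l => (c.rev : ℕ) < α i := by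
    ext c
    simp only [mem_filter, mem_univ, true_and]
    exact ⟨fun h => not_le.1 fun h' => (rowsInl_lt_rowsInr hα h').not_gt h, rowsInr_lt_rowsInl hα⟩
  rw [hfilter, card_nbij' (t := univ.filter fun c : Fin l => (c : ℕ) < α i) Fin.rev Fin.rev
    (fun c hc => by simpa using hc) (fun c hc => by have := c.isLt; simp at hc ⊢; omega)
    (by simp [Set.LeftInvOn]) (by simp [Set.LeftInvOn]), Fin.card_filter_val_lt]
  have := (α i).isLt
  omega

theorem sign_rowsEquiv {α : Fin k → Fin (l + 1)} (hα : Antitone α) :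
    Perm.sign (finSumFinEquiv.symm.trans (rowsEquiv hα)) = (-1) ^ (∑ i, (α i : ℕ)) := by
  rw [Perm.sign_finSumFinEquiv_symm_trans (rowsEquiv hα) (rowsInl_strictMono α)
    (rowsInr_strictMono hα), Finset.prod_pow_eq_pow_sum]
  congr 1
  exact Finset.sum_congr rfl fun i _ => card_rowsInr_lt_rowsInl hα i

theorem rowsInr_injective : Function.Injective (rowsInr : (Fin k → Fin (l + 1)) → _) := by
  intro α β h
  funext i
  have hi := congrArg Fin.val (congrFun h i)
  have := (α i).isLt
  have := (β i).isLt
  simp only [rowsInr] at hi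
  exact Fin.ext (by omega)

theorem exists_rowsInr_eq {s : Fin k → Fin (l + k)} (hs : StrictMono s) :
    ∃ α : Fin k → Fin (l + 1), Antitone α ∧ rowsInr α = s := by
  refine ⟨fun i => ⟨l + i - s i, by have := hs.le_val_apply i; omega⟩, fun i j hij => ?_,
    funext fun i => Fin.ext ?_⟩
  · have := hs.val_apply_add_le hij
    have := hs.val_apply_add_le_add j
    simp only [Fin.le_def]
    omega
  · have := hs.val_apply_add_le_add i
    simp only [rowsInr]
    omega

end BoxPartition

section Laplace

variable {k l : ℕ}

def blockPerm (e : Fin l ⊕ Fin k ≃ Fin (l + k)) (σ : Perm (Fin l) × Perm (Fin k)) :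
    Perm (Fin (l + k)) :=
  finSumFinEquiv.symm.trans ((Perm.sumCongr σ.1 σ.2).trans e)

theorem blockPerm_finSumFinEquiv (e : Fin l ⊕ Fin k ≃ Fin (l + k))
    (σ : Perm (Fin l) × Perm (Fin k)) (p : Fin l ⊕ Fin k) :
    blockPerm e σ (finSumFinEquiv p) = e (Perm.sumCongr σ.1 σ.2 p) := by
  simp [blockPerm]

theorem sign_blockPerm (e : Fin l ⊕ Fin k ≃ Fin (l + k)) (σ : Perm (Fin l) × Perm (Fin k)) :
    Perm.sign (blockPerm e σ) =
      Perm.sign (finSumFinEquiv.symm.trans e) * Perm.sign σ.1 * Perm.sign σ.2 := by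
  have : blockPerm e σ = ((finSumFinEquiv.symm.trans (Perm.sumCongr σ.1 σ.2)).trans
      finSumFinEquiv).trans (finSumFinEquiv.symm.trans e) := by
    ext c
    simp [blockPerm]
  rw [this, Perm.sign_trans, Perm.sign_symm_trans_trans, Perm.sign_sumCongr, mul_assoc]

theorem blockPerm_injective {α β : Fin k → Fin (l + 1)} (hα : Antitone α) (hβ : Antitone β)
    {σ τ : Perm (Fin l) × Perm (Fin k)}
    (h : blockPerm (rowsEquiv hα) σ = blockPerm (rowsEquiv hβ) τ) : α = β ∧ σ = τ := by
  have hrange : ∀ {γ : Fin k → Fin (l + 1)} (hγ : Antitone γ) (ρ : Perm (Fin l) × Perm (Fin k)),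
      Set.range (fun b => blockPerm (rowsEquiv hγ) ρ (finSumFinEquiv (.inr b))) =
        Set.range (rowsInr γ) := fun {γ} hγ ρ => by
    rw [← ρ.2.surjective.range_comp (rowsInr γ)]
    exact congrArg Set.range (funext fun b => blockPerm_finSumFinEquiv _ ρ (.inr b))
  have hαβ : α = β := rowsInr_injective <|
    ((rowsInr_strictMono hα).range_inj (rowsInr_strictMono hβ)).1 <| by
      rw [← hrange hα σ, ← hrange hβ τ, h]
  subst hαβ
  refine ⟨rfl, Perm.sumCongrHom_injective (Equiv.ext fun p => (rowsEquiv hα).injective ?_)⟩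
  have hp := congrArg (· (finSumFinEquiv p)) h
  simp only [blockPerm_finSumFinEquiv] at hp
  exact hp

theorem exists_blockPerm_eq (π : Perm (Fin (l + k))) :
    ∃ α : Fin k → Fin (l + 1), ∃ hα : Antitone α, ∃ σ, blockPerm (rowsEquiv hα) σ = π := by
  set T := Finset.univ.image fun b => π (finSumFinEquiv (.inr b))
  have hT : T.card = k := by
    rw [Finset.card_image_of_injective _ fun b b' h =>
      Sum.inr_injective (finSumFinEquiv.injective (π.injective h)), Finset.card_fin]
  obtain ⟨α, hα, hαs⟩ := exists_rowsInr_eq (T.orderEmbOfFin hT).strictMono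
  set τ : Perm (Fin l ⊕ Fin k) := finSumFinEquiv.trans (π.trans (rowsEquiv hα).symm)
  have hτ : Set.MapsTo τ (Set.range Sum.inr) (Set.range Sum.inr) := by
    rintro _ ⟨b, rfl⟩
    have hb : π (finSumFinEquiv (.inr b)) ∈ Set.range (rowsInr α) := by
      rw [hαs, Finset.range_orderEmbOfFin]
      exact Finset.mem_coe.2 (Finset.mem_image_of_mem _ (Finset.mem_univ b))
    obtain ⟨i, hi⟩ := hb
    exact ⟨i, show _ = (rowsEquiv hα).symm _ from (Equiv.eq_symm_apply _).2 hi⟩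
  obtain ⟨σ, hσ⟩ := Perm.mem_sumCongrHom_range_of_perm_mapsTo_inl
    ((Perm.perm_mapsTo_inl_iff_mapsTo_inr τ).2 hτ)
  refine ⟨α, hα, σ, Equiv.ext fun c => ?_⟩
  have := congrArg (fun ρ => rowsEquiv hα (ρ (finSumFinEquiv.symm c))) hσ
  simpa [τ, blockPerm] using this

variable {R : Type*} [CommRing R]

theorem sign_mul_det_mul_det_eq_sum_blockPerm (B : Matrix (Fin (l + k)) (Fin l ⊕ Fin k) R)
    (e : Fin l ⊕ Fin k ≃ Fin (l + k)) :
    (Perm.sign (finSumFinEquiv.symm.trans e) : R) *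
        ((B.submatrix (e ∘ Sum.inl) Sum.inl).det * (B.submatrix (e ∘ Sum.inr) Sum.inr).det) =
      ∑ σ, (Perm.sign (blockPerm e σ) : R) * ∏ c, B (blockPerm e σ c) (finSumFinEquiv.symm c) := by
  rw [det_apply', det_apply', Finset.sum_mul_sum]
  simp_rw [Finset.mul_sum]
  rw [← Fintype.sum_prod_type']
  refine Finset.sum_congr rfl fun σ _ => ?_
  rw [← finSumFinEquiv.prod_comp, Fintype.prod_sum_type, sign_blockPerm]
  simp only [blockPerm_finSumFinEquiv, Equiv.symm_apply_apply, submatrix_apply,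
    Function.comp_apply, Perm.sumCongr_apply, Sum.map_inl, Sum.map_inr]
  push_cast
  ring

theorem det_eq_sum_boxPartitions (B : Matrix (Fin (l + k)) (Fin l ⊕ Fin k) R) :
    (B.submatrix id finSumFinEquiv.symm).det =
      ∑ α ∈ boxPartitions k l, (-1) ^ (∑ i, (α i : ℕ)) *
        ((B.submatrix (rowsInl α) Sum.inl).det * (B.submatrix (rowsInr α) Sum.inr).det) := by
  have hterm : ∀ α (hα : α ∈ boxPartitions k l), (-1) ^ (∑ i, (α i : ℕ)) *
      ((B.submatrix (rowsInl α) Sum.inl).det * (B.submatrix (rowsInr α) Sum.inr).det) =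
        ∑ σ, (Perm.sign (blockPerm (rowsEquiv (mem_boxPartitions.1 hα)) σ) : R) *
          ∏ c, B (blockPerm (rowsEquiv (mem_boxPartitions.1 hα)) σ c) (finSumFinEquiv.symm c) :=
    fun α hα => by
      rw [← sign_mul_det_mul_det_eq_sum_blockPerm, sign_rowsEquiv]
      push_cast
      rfl
  rw [← Finset.sum_attach, Finset.sum_congr rfl fun α _ => hterm α.1 α.2, det_apply',
    ← Finset.sum_product']
  symm
  refine Finset.sum_bij (fun x _ => blockPerm (rowsEquiv (mem_boxPartitions.1 x.1.2)) x.2)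
    (fun _ _ => Finset.mem_univ _) (fun x _ y _ h => ?_) (fun π _ => ?_) (fun _ _ => rfl)
  · obtain ⟨hαβ, hστ⟩ := blockPerm_injective _ _ h
    exact Prod.ext (Subtype.ext hαβ) hστ
  · obtain ⟨α, hα, σ, rfl⟩ := exists_blockPerm_eq π
    exact ⟨(⟨α, mem_boxPartitions.2 hα⟩, σ), by simp, rfl⟩

end Laplace

section Koszul

variable (k l : ℕ)

noncomputable def koszulMatrix : Matrix (Fin (l + k)) (Fin l ⊕ Fin k) (Rbig k l) :=
  Matrix.of fun r => Sum.elim (fun a => xe k l (r - a)) (fun b => ye' k l (r - b))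

noncomputable def koszulVec : Fin l ⊕ Fin k → Rbig k l :=
  Sum.elim (fun a => yv k l (a + 1) - yv' k l (a + 1)) (fun b => xv k l (b + 1) - xv' k l (b + 1))

theorem xe_natCast (n : ℕ) : xe k l n = xv k l n := by simp [xe]

theorem ye'_natCast (n : ℕ) : ye' k l n = yv' k l n := by simp [ye']

theorem SigXY_sub_SigXY (n : ℕ) :
    SigXY k l (xv k l) (yv k l) n - SigXY k l (xv' k l) (yv' k l) n =
      ∑ p ∈ antidiagonal n, xe k l p.1 * (yv k l p.2 - yv' k l p.2) +
        ∑ p ∈ antidiagonal n, ye' k l p.1 * (xv k l p.2 - xv' k l p.2) := by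
  rw [← Finset.Nat.sum_antidiagonal_swap (f := fun p => ye' k l p.1 * _), SigXY, SigXY,
    ← Finset.Nat.sum_antidiagonal_eq_sum_range_succ (fun i j => xv k l i * yv k l j),
    ← Finset.Nat.sum_antidiagonal_eq_sum_range_succ (fun i j => xv' k l i * yv' k l j),
    ← Finset.sum_sub_distrib, ← Finset.sum_add_distrib]
  refine Finset.sum_congr rfl fun p _ => ?_
  simp only [Prod.fst_swap, Prod.snd_swap, xe_natCast, ye'_natCast]
  ring

theorem koszulMatrix_mulVec (r : Fin (l + k)) :
    (koszulMatrix k l *ᵥ koszulVec k l) r =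
      SigXY k l (xv k l) (yv k l) (r + 1) - SigXY k l (xv' k l) (yv' k l) (r + 1) := by
  have hxe : ∀ n < 0, xe k l n = 0 := fun n hn => if_neg (by omega)
  have hye' : ∀ n < 0, ye' k l n = 0 := fun n hn => if_neg (by omega)
  have hy : ∀ a, l ≤ a → yv k l (a + 1) - yv' k l (a + 1) = 0 := fun a ha => by
    simp [yv, yv', show ¬ a + 1 ≤ l by omega]
  have hx : ∀ a, k ≤ a → xv k l (a + 1) - xv' k l (a + 1) = 0 := fun a ha => by
    simp [xv, xv', show ¬ a + 1 ≤ k by omega]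
  have hxy := Finset.Nat.sum_antidiagonal_mul_eq_sum_fin (xe k l) hxe
    (fun j => yv k l j - yv' k l j) (by simp [yv, yv']) hy (r + 1)
  have hyx := Finset.Nat.sum_antidiagonal_mul_eq_sum_fin (ye' k l) hye'
    (fun j => xv k l j - xv' k l j) (by simp [xv, xv']) hx (r + 1)
  rw [SigXY_sub_SigXY, hxy, hyx]
  simp only [mulVec, dotProduct, Fintype.sum_sum_type, koszulMatrix, koszulVec, of_apply,
    Sum.elim_inl, Sum.elim_inr]
  push_cast
  ring_nf

theorem koszulMatrix_mulVec_mem (r : Fin (l + k)) :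
    (koszulMatrix k l *ᵥ koszulVec k l) r ∈ Ibig k l :=
  koszulMatrix_mulVec k l r ▸ Ideal.subset_span ⟨r + 1, ⟨by omega, by omega⟩, rfl⟩

variable {k l}

theorem det_xe_conjP_eq_det_rowsInl (α : Fin k → Fin (l + 1)) :
    Matrix.det (fun a b : Fin l =>
        xe k l ((conjP l (fun i => (α i : ℕ)) a : ℤ) + (b : ℤ) - (a : ℤ))) =
      ((koszulMatrix k l).submatrix (rowsInl α) Sum.inl).det := by
  rw [← det_submatrix_equiv_self Fin.revPerm]
  congr 1
  funext a b
  have := a.isLt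
  have := b.isLt
  simp only [submatrix_apply, koszulMatrix, of_apply, Sum.elim_inl, rowsInl, Fin.revPerm_apply,
    Fin.rev_rev, Fin.val_rev]
  congr 1
  omega

theorem det_ye'_eq_det_rowsInr (α : Fin k → Fin (l + 1)) :
    Matrix.det (fun a b : Fin k =>
        ye' k l (((l - (α a.rev : ℕ) : ℕ) : ℤ) + (b : ℤ) - (a : ℤ))) =
      ((koszulMatrix k l).submatrix (rowsInr α) Sum.inr).det := by
  rw [← det_submatrix_equiv_self Fin.revPerm]
  congr 1
  funext a b
  have := a.isLt
  have := b.isLt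
  simp only [submatrix_apply, koszulMatrix, of_apply, Sum.elim_inr, rowsInr, Fin.revPerm_apply,
    Fin.val_rev]
  congr 1
  omega

theorem fBig_eq_det : fBig k l = ((koszulMatrix k l).submatrix id finSumFinEquiv.symm).det := by
  rw [det_eq_sum_boxPartitions, fBig]
  exact Finset.sum_congr rfl fun α _ => by
    rw [det_xe_conjP_eq_det_rowsInl, det_ye'_eq_det_rowsInr, mul_assoc]

end Koszul

theorem stmt_13_general (k l : ℕ) (j : ℕ) (hj1 : 1 ≤ j) (hjl : j ≤ l) :
    (yv k l j - yv' k l j) * fBig k l ∈ Ibig k l := by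
  obtain ⟨a, rfl⟩ : ∃ a : Fin l, j = a + 1 := ⟨⟨j - 1, by omega⟩, by simp; omega⟩
  have hmulVec : ∀ r, ((koszulMatrix k l).submatrix id finSumFinEquiv.symm *ᵥ
      (koszulVec k l ∘ finSumFinEquiv.symm)) r ∈ Ibig k l := fun r => by
    rw [submatrix_mulVec_equiv, Equiv.symm_symm, Function.comp_assoc, Equiv.symm_comp_self]
    exact koszulMatrix_mulVec_mem k l r
  rw [fBig_eq_det, mul_comm]
  simpa [koszulVec] using det_mul_mem_of_mulVec_mem hmulVec (finSumFinEquiv (.inl a))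

/-- The map `Δ` with `Δ(1) = ∑_α (−1)^{|α|} π_α ⊗ π'_{\overline{α^*}}` is a bimodule map:
in the Koszul presentation, `(y_j − y'_j) f ∈ I` for all `j = 1,...,l`. -/
theorem stmt_13 (k l : ℕ) (hl : 1 ≤ l) (hkl : l ≤ k) (j : ℕ) (hj1 : 1 ≤ j) (hjl : j ≤ l) :
    (yv k l j - yv' k l j) * fBig k l ∈ Ibig k l :=
  stmt_13_general k l j hj1 hjl
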